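/- arXiv:2306.08594 — 4 statements merged into one kernel-verified Lean document; each statement's English description precedes it below -/
import Mathlib

section
/- If a directed co-graph G with at least two vertices is strongly connected, then G is the join of two directed co-graphs, i.e., G = G1 × G2 where V(G) is partitioned into the vertex sets of two directed co-graphs G1 and G2 and E(G) contains, besides the edges of G1 and G2, all edges (u,v) and (v,u) with u ∈ V(G1), v ∈ V(G2). -/
universe u

/-- There is a directed walk of length `n` from `u` to `v` in the digraph
with edge relation `E`. -/
def HasWalkLen {V : Type u} (E : V → V → Prop) (u v : V) (n : ℕ) : Prop :=
  ∃ f : Fin (n + 1) → V, f 0 = u ∧ f (Fin.last n) = v ∧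
    ∀ i : Fin n, E (f i.castSucc) (f i.succ)

/-- `v` is reachable from `u` by a directed walk. -/
def Reaches {V : Type u} (E : V → V → Prop) (u v : V) : Prop :=
  ∃ n, HasWalkLen E u v n

/-- Directed distance from `u` to `v` (length of a shortest directed path);
a junk value (`sInf ∅ = 0`) if `v` is unreachable from `u`. -/
noncomputable def ddist {V : Type u} (E : V → V → Prop) (u v : V) : ℕ :=
  sInf {n | HasWalkLen E u v n}

/-- `w` resolves the vertices `u` and `v`: `w = u`, or `w = v`, or both
distances from `w` are defined (reachable) and different. -/
def Resolves {V : Type u} (E : V → V → Prop) (w u v : V) : Prop :=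
  w = u ∨ w = v ∨
    (Reaches E w u ∧ Reaches E w v ∧ ddist E w u ≠ ddist E w v)

/-- `R` resolves the vertex set `U`: every pair of distinct vertices of `U`
is resolved by some member of `R`. -/
def ResolvesSet {V : Type u} (E : V → V → Prop) (R U : Set V) : Prop :=
  ∀ u ∈ U, ∀ v ∈ U, u ≠ v → ∃ w ∈ R, Resolves E w u v

/-- The digraph is strongly connected on the vertex set `S`. -/
def SConn {V : Type u} (E : V → V → Prop) (S : Set V) : Prop :=
  ∀ u ∈ S, ∀ v ∈ S, Reaches E u v

/-- `u` is a 1-vertex w.r.t. `R`: `u ∉ R` and every `w ∈ R` has an edge to `u`. -/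
def OneVertex {V : Type u} (E : V → V → Prop) (R : Set V) (u : V) : Prop :=
  u ∉ R ∧ ∀ w ∈ R, E w u

/-- `u` is a 2-vertex w.r.t. `R`: `u ∉ R` and no `w ∈ R` has an edge to `u`. -/
def TwoVertex {V : Type u} (E : V → V → Prop) (R : Set V) (u : V) : Prop :=
  u ∉ R ∧ ∀ w ∈ R, ¬ E w u

/-- Directed co-graphs with vertex set `S` and edge relation `E`, built
inductively from single vertices by disjoint union, join and directed join. -/
inductive IsDicograph {V : Type u} : Set V → (V → V → Prop) → Prop
  | single (v : V) : IsDicograph {v} fun _ _ => False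
  | disjUnion {S₁ S₂ : Set V} {E₁ E₂ : V → V → Prop} :
      IsDicograph S₁ E₁ → IsDicograph S₂ E₂ → Disjoint S₁ S₂ →
      IsDicograph (S₁ ∪ S₂) fun u v => E₁ u v ∨ E₂ u v
  | join {S₁ S₂ : Set V} {E₁ E₂ : V → V → Prop} :
      IsDicograph S₁ E₁ → IsDicograph S₂ E₂ → Disjoint S₁ S₂ →
      IsDicograph (S₁ ∪ S₂) fun u v =>
        E₁ u v ∨ E₂ u v ∨ (u ∈ S₁ ∧ v ∈ S₂) ∨ (u ∈ S₂ ∧ v ∈ S₁)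
  | dirJoin {S₁ S₂ : Set V} {E₁ E₂ : V → V → Prop} :
      IsDicograph S₁ E₁ → IsDicograph S₂ E₂ → Disjoint S₁ S₂ →
      IsDicograph (S₁ ∪ S₂) fun u v => E₁ u v ∨ E₂ u v ∨ (u ∈ S₁ ∧ v ∈ S₂)

/-!
Strong connectivity rules out the other two ways of building a co-graph on at least two
vertices: in a disjoint union `G₁ ∪ G₂` no edge leaves `V(G₁)`, and in a directed join
`G₁ ≫ G₂` no edge leaves `V(G₂)`, so in either case some vertex cannot reach another.
-/

namespace IsDicograph

variable {V : Type u} {S : Set V} {E : V → V → Prop}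

theorem nonempty (h : IsDicograph S E) : S.Nonempty := by
  induction h with
  | single v => exact Set.singleton_nonempty v
  | disjUnion _ _ _ ih _ | join _ _ _ ih _ | dirJoin _ _ _ ih _ =>
    exact ih.mono Set.subset_union_left

theorem mem_of_edge (h : IsDicograph S E) {u v : V} (huv : E u v) : u ∈ S ∧ v ∈ S := by
  induction h with
  | single v => exact huv.elim
  | disjUnion _ _ _ ih₁ ih₂ =>
    rcases huv with h | h
    · exact (ih₁ h).imp Or.inl Or.inl
    · exact (ih₂ h).imp Or.inr Or.inr
  | join _ _ _ ih₁ ih₂ =>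
    rcases huv with h | h | ⟨hu, hv⟩ | ⟨hu, hv⟩
    · exact (ih₁ h).imp Or.inl Or.inl
    · exact (ih₂ h).imp Or.inr Or.inr
    · exact ⟨Or.inl hu, Or.inr hv⟩
    · exact ⟨Or.inr hu, Or.inl hv⟩
  | dirJoin _ _ _ ih₁ ih₂ =>
    rcases huv with h | h | ⟨hu, hv⟩
    · exact (ih₁ h).imp Or.inl Or.inl
    · exact (ih₂ h).imp Or.inr Or.inr
    · exact ⟨Or.inl hu, Or.inr hv⟩

end IsDicograph

section Reachability

variable {V : Type u} {E : V → V → Prop}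

theorem Reaches.mem_of_forall_edge {T : Set V} (hT : ∀ x y, x ∈ T → E x y → y ∈ T)
    {u v : V} (huv : Reaches E u v) (hu : u ∈ T) : v ∈ T := by
  obtain ⟨n, f, hf₀, hfn, hf⟩ := huv
  have hfT : ∀ i, f i ∈ T :=
    Fin.induction (hf₀ ▸ hu) fun i hi => hT _ _ hi (hf i)
  exact hfn ▸ hfT (Fin.last n)

theorem not_sConn_of_forall_edge {S T : Set V} (hT : ∀ x y, x ∈ T → E x y → y ∈ T)
    {u v : V} (hu : u ∈ S ∩ T) (hv : v ∈ S \ T) : ¬ SConn E S :=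
  fun hsc => hv.2 ((hsc u hu.1 v hv.1).mem_of_forall_edge hT hu.2)

end Reachability

namespace IsDicograph

variable {V : Type u} {S₁ S₂ : Set V} {E₁ E₂ : V → V → Prop}

theorem not_sConn_disjUnion (h₁ : IsDicograph S₁ E₁) (h₂ : IsDicograph S₂ E₂)
    (hdisj : Disjoint S₁ S₂) : ¬ SConn (fun u v => E₁ u v ∨ E₂ u v) (S₁ ∪ S₂) := by
  obtain ⟨u, hu⟩ := h₁.nonempty
  obtain ⟨v, hv⟩ := h₂.nonempty
  refine not_sConn_of_forall_edge (T := S₁) ?_ ⟨Or.inl hu, hu⟩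
    ⟨Or.inr hv, hdisj.notMem_of_mem_right hv⟩
  rintro x y hx (h | h)
  · exact (h₁.mem_of_edge h).2
  · exact absurd (h₂.mem_of_edge h).1 (hdisj.notMem_of_mem_left hx)

theorem not_sConn_dirJoin (h₁ : IsDicograph S₁ E₁) (h₂ : IsDicograph S₂ E₂)
    (hdisj : Disjoint S₁ S₂) :
    ¬ SConn (fun u v => E₁ u v ∨ E₂ u v ∨ (u ∈ S₁ ∧ v ∈ S₂)) (S₁ ∪ S₂) := by
  obtain ⟨u, hu⟩ := h₁.nonempty
  obtain ⟨v, hv⟩ := h₂.nonempty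
  refine not_sConn_of_forall_edge (T := S₂) ?_ ⟨Or.inr hv, hv⟩
    ⟨Or.inl hu, hdisj.notMem_of_mem_left hu⟩
  rintro x y hx (h | h | ⟨-, hy⟩)
  · exact absurd (h₁.mem_of_edge h).1 (hdisj.notMem_of_mem_right hx)
  · exact (h₂.mem_of_edge h).2
  · exact hy

end IsDicograph

/-- A strongly connected directed co-graph with at least two vertices is a join
of two directed co-graphs. -/
theorem stmt_0 {V : Type u} {S : Set V} {E : V → V → Prop}
    (hG : IsDicograph S E)
    (htwo : ∃ u ∈ S, ∃ v ∈ S, u ≠ v)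
    (hsc : SConn E S) :
    ∃ (S₁ S₂ : Set V) (E₁ E₂ : V → V → Prop),
      IsDicograph S₁ E₁ ∧ IsDicograph S₂ E₂ ∧ Disjoint S₁ S₂ ∧
      S = S₁ ∪ S₂ ∧
      ∀ u v, E u v ↔
        (E₁ u v ∨ E₂ u v ∨ (u ∈ S₁ ∧ v ∈ S₂) ∨ (u ∈ S₂ ∧ v ∈ S₁)) := by
  cases hG with
  | single w =>
    obtain ⟨u, rfl, v, rfl, hne⟩ := htwo
    exact absurd rfl hne
  | disjUnion h₁ h₂ hdisj => exact absurd hsc (IsDicograph.not_sConn_disjUnion h₁ h₂ hdisj)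
  | join h₁ h₂ hdisj => exact ⟨_, _, _, _, h₁, h₂, hdisj, rfl, fun _ _ => Iff.rfl⟩
  | dirJoin h₁ h₂ hdisj => exact absurd hsc (IsDicograph.not_sConn_dirJoin h₁ h₂ hdisj)
end

section
/- In a strongly connected directed co-graph G, for every pair of distinct vertices u, v the directed distance satisfies d_G(u,v) ≤ 2. -/
/-!
Look at the last operation building the co-graph. A disjoint union `G₁ + G₂` has no edge
leaving `G₁`, and a directed join `G₁ → G₂` has no edge leaving `G₂`; a strongly connected
digraph has no proper nonempty vertex set closed under out-edges, so neither case occurs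
(and a single vertex has no pair of distinct vertices). In a join `G₁ ⊕ G₂`, vertices in
different parts are adjacent, and two vertices of the same part are joined by a path of
length 2 through the other part.
-/

universe u

variable {V : Type u}

lemma IsDicograph.nonempty_s1 {S : Set V} {E : V → V → Prop} (hG : IsDicograph S E) :
    S.Nonempty := by
  induction hG with
  | single v => exact ⟨v, rfl⟩
  | disjUnion _ _ _ ih _ | join _ _ _ ih _ | dirJoin _ _ _ ih _ =>
    exact ih.mono Set.subset_union_left

lemma IsDicograph.mem_of_edge_s1 {S : Set V} {E : V → V → Prop} (hG : IsDicograph S E)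
    {x y : V} (h : E x y) : x ∈ S ∧ y ∈ S := by
  induction hG with
  | single v => exact h.elim
  | disjUnion _ _ _ ih₁ ih₂ =>
    rcases h with h | h
    · exact ⟨Or.inl (ih₁ h).1, Or.inl (ih₁ h).2⟩
    · exact ⟨Or.inr (ih₂ h).1, Or.inr (ih₂ h).2⟩
  | join _ _ _ ih₁ ih₂ =>
    rcases h with h | h | ⟨hx, hy⟩ | ⟨hx, hy⟩
    · exact ⟨Or.inl (ih₁ h).1, Or.inl (ih₁ h).2⟩
    · exact ⟨Or.inr (ih₂ h).1, Or.inr (ih₂ h).2⟩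
    · exact ⟨Or.inl hx, Or.inr hy⟩
    · exact ⟨Or.inr hx, Or.inl hy⟩
  | dirJoin _ _ _ ih₁ ih₂ =>
    rcases h with h | h | ⟨hx, hy⟩
    · exact ⟨Or.inl (ih₁ h).1, Or.inl (ih₁ h).2⟩
    · exact ⟨Or.inr (ih₂ h).1, Or.inr (ih₂ h).2⟩
    · exact ⟨Or.inl hx, Or.inr hy⟩

section Walks

variable {E : V → V → Prop}

lemma Reaches.mem_of_closed {T : Set V} (hT : ∀ x y, x ∈ T → E x y → y ∈ T) {a b : V}
    (h : Reaches E a b) (ha : a ∈ T) : b ∈ T := by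
  obtain ⟨n, f, hf₀, hfn, hstep⟩ := h
  have hfT : ∀ i, f i ∈ T := by
    intro i
    induction i using Fin.induction with
    | zero => rwa [hf₀]
    | succ j ih => exact hT _ _ ih (hstep j)
  exact hfn ▸ hfT _

lemma SConn.subset_of_closed {S T : Set V} (hsc : SConn E S)
    (hT : ∀ x y, x ∈ T → E x y → y ∈ T) {a : V} (haS : a ∈ S) (haT : a ∈ T) : S ⊆ T :=
  fun _ hb => (hsc a haS _ hb).mem_of_closed hT haT

lemma ddist_le_of_hasWalkLen {a b : V} {n : ℕ} (h : HasWalkLen E a b n) : ddist E a b ≤ n :=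
  Nat.sInf_le h

lemma ddist_le_one_of_edge {a b : V} (h : E a b) : ddist E a b ≤ 1 :=
  ddist_le_of_hasWalkLen ⟨![a, b], rfl, rfl, fun i => by fin_cases i; exact h⟩

lemma ddist_le_two_of_edge_edge {a b c : V} (hab : E a b) (hbc : E b c) : ddist E a c ≤ 2 :=
  ddist_le_of_hasWalkLen ⟨![a, b, c], rfl, rfl, fun i => by
    fin_cases i
    exacts [hab, hbc]⟩

lemma ddist_le_two_of_forall_cross_edge {S₁ S₂ : Set V} (h₁ : S₁.Nonempty) (h₂ : S₂.Nonempty)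
    (hE : ∀ x y, (x ∈ S₁ ∧ y ∈ S₂) ∨ (x ∈ S₂ ∧ y ∈ S₁) → E x y) :
    ∀ a ∈ S₁ ∪ S₂, ∀ b ∈ S₁ ∪ S₂, ddist E a b ≤ 2 := by
  obtain ⟨w₁, hw₁⟩ := h₁
  obtain ⟨w₂, hw₂⟩ := h₂
  rintro a (ha | ha) b (hb | hb)
  · exact ddist_le_two_of_edge_edge (hE _ _ (.inl ⟨ha, hw₂⟩)) (hE _ _ (.inr ⟨hw₂, hb⟩))
  · exact (ddist_le_one_of_edge (hE _ _ (.inl ⟨ha, hb⟩))).trans one_le_two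
  · exact (ddist_le_one_of_edge (hE _ _ (.inr ⟨ha, hb⟩))).trans one_le_two
  · exact ddist_le_two_of_edge_edge (hE _ _ (.inr ⟨ha, hw₁⟩)) (hE _ _ (.inl ⟨hw₁, hb⟩))

end Walks

section NotStronglyConnected

variable {S₁ S₂ : Set V} {E₁ E₂ : V → V → Prop}

lemma not_sConn_disjUnion (h₁ : IsDicograph S₁ E₁) (h₂ : IsDicograph S₂ E₂)
    (hd : Disjoint S₁ S₂) : ¬ SConn (fun u v => E₁ u v ∨ E₂ u v) (S₁ ∪ S₂) := by
  intro hsc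
  obtain ⟨a, ha⟩ := h₁.nonempty_s1
  obtain ⟨b, hb⟩ := h₂.nonempty_s1
  have hclosed : ∀ x y, x ∈ S₁ → E₁ x y ∨ E₂ x y → y ∈ S₁ := by
    rintro x y hx (h | h)
    · exact (h₁.mem_of_edge_s1 h).2
    · exact absurd (h₂.mem_of_edge_s1 h).1 (Set.disjoint_left.mp hd hx)
  exact Set.disjoint_left.mp hd (hsc.subset_of_closed hclosed (.inl ha) ha (.inr hb)) hb

lemma not_sConn_dirJoin (h₁ : IsDicograph S₁ E₁) (h₂ : IsDicograph S₂ E₂)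
    (hd : Disjoint S₁ S₂) :
    ¬ SConn (fun u v => E₁ u v ∨ E₂ u v ∨ (u ∈ S₁ ∧ v ∈ S₂)) (S₁ ∪ S₂) := by
  intro hsc
  obtain ⟨a, ha⟩ := h₁.nonempty_s1
  obtain ⟨b, hb⟩ := h₂.nonempty_s1
  have hclosed : ∀ x y, x ∈ S₂ → E₁ x y ∨ E₂ x y ∨ (x ∈ S₁ ∧ y ∈ S₂) → y ∈ S₂ := by
    rintro x y hx (h | h | ⟨hx₁, -⟩)
    · exact absurd hx (Set.disjoint_left.mp hd (h₁.mem_of_edge_s1 h).1)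
    · exact (h₂.mem_of_edge_s1 h).2
    · exact absurd hx (Set.disjoint_left.mp hd hx₁)
  exact Set.disjoint_left.mp hd ha (hsc.subset_of_closed hclosed (.inr hb) hb (.inl ha))

end NotStronglyConnected

/-- In a strongly connected directed co-graph all directed distances between
distinct vertices are at most 2. -/
theorem stmt_1 {V : Type u} {S : Set V} {E : V → V → Prop}
    (hG : IsDicograph S E) (hsc : SConn E S) :
    ∀ u ∈ S, ∀ v ∈ S, u ≠ v → ddist E u v ≤ 2 := by
  cases hG with
  | single w =>
    rintro u rfl v rfl huv
    exact absurd rfl huv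
  | disjUnion h₁ h₂ hd => exact absurd hsc (not_sConn_disjUnion h₁ h₂ hd)
  | join h₁ h₂ _ =>
    exact fun u hu v hv _ => ddist_le_two_of_forall_cross_edge h₁.nonempty_s1 h₂.nonempty_s1
      (fun _ _ h => .inr (.inr h)) u hu v hv
  | dirJoin h₁ h₂ hd => exact absurd hsc (not_sConn_dirJoin h₁ h₂ hd)
end

section
/- Let G be a strongly connected directed graph in which all directed distances between distinct vertices are at most 2, and let R be a resolving set for G. Then there is at most one 1-vertex of G with respect to R, and at most one 2-vertex of G with respect to R. -/
universe u

/-! Every vertex of `R` is at distance 1 from each 1-vertex and, by the diameter bound, at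
distance 2 from each reachable 2-vertex, so `R` cannot resolve two 1-vertices or two
2-vertices. -/

section

variable {V : Type u} {E : V → V → Prop} {u v : V}

lemma hasWalkLen_zero_iff : HasWalkLen E u v 0 ↔ u = v := by
  constructor
  · rintro ⟨f, rfl, rfl, -⟩
    rfl
  · rintro rfl
    exact ⟨fun _ => u, rfl, rfl, Fin.elim0⟩

lemma hasWalkLen_one_iff : HasWalkLen E u v 1 ↔ E u v := by
  constructor
  · rintro ⟨f, rfl, rfl, he⟩
    exact he 0
  · intro h
    exact ⟨![u, v], rfl, rfl, Fin.forall_fin_one.mpr h⟩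

lemma hasWalkLen_ddist (h : Reaches E u v) : HasWalkLen E u v (ddist E u v) :=
  Nat.sInf_mem h

lemma ddist_eq_one_of_adj (hne : u ≠ v) (he : E u v) : ddist E u v = 1 := by
  have hle : ddist E u v ≤ 1 := Nat.sInf_le (hasWalkLen_one_iff.mpr he)
  have hwalk := hasWalkLen_ddist ⟨1, hasWalkLen_one_iff.mpr he⟩
  interval_cases h : ddist E u v
  · exact absurd (hasWalkLen_zero_iff.mp hwalk) hne
  · rfl

lemma ddist_eq_two_of_not_adj (hne : u ≠ v) (hnadj : ¬ E u v) (hr : Reaches E u v)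
    (hle : ddist E u v ≤ 2) : ddist E u v = 2 := by
  have hwalk := hasWalkLen_ddist hr
  interval_cases h : ddist E u v
  · exact absurd (hasWalkLen_zero_iff.mp hwalk) hne
  · exact absurd (hasWalkLen_one_iff.mp hwalk) hnadj
  · rfl

lemma ResolvesSet.eq_of_ddist_eq {R : Set V} (hR : ResolvesSet E R Set.univ)
    (hu : u ∉ R) (hv : v ∉ R)
    (hd : ∀ w ∈ R, w ≠ u → w ≠ v → Reaches E w u → Reaches E w v →
      ddist E w u = ddist E w v) :
    u = v := by
  by_contra hne
  obtain ⟨w, hw, hres⟩ := hR u trivial v trivial hne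
  rcases hres with rfl | rfl | ⟨hru, hrv, hdiff⟩
  · exact hu hw
  · exact hv hw
  · exact hdiff (hd w hw (ne_of_mem_of_not_mem hw hu) (ne_of_mem_of_not_mem hw hv) hru hrv)

end

theorem stmt_3_general {V : Type u} {E : V → V → Prop}
    (hdiam : ∀ u v : V, u ≠ v → ddist E u v ≤ 2)
    {R : Set V} (hR : ResolvesSet E R Set.univ) :
    (∀ u v : V, OneVertex E R u → OneVertex E R v → u = v) ∧
    (∀ u v : V, TwoVertex E R u → TwoVertex E R v → u = v) := by
  refine ⟨fun u v hu hv => hR.eq_of_ddist_eq hu.1 hv.1 ?_,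
    fun u v hu hv => hR.eq_of_ddist_eq hu.1 hv.1 ?_⟩
  · intro w hw hwu hwv _ _
    rw [ddist_eq_one_of_adj hwu (hu.2 w hw), ddist_eq_one_of_adj hwv (hv.2 w hw)]
  · intro w hw hwu hwv hru hrv
    rw [ddist_eq_two_of_not_adj hwu (hu.2 w hw) hru (hdiam w u hwu),
      ddist_eq_two_of_not_adj hwv (hv.2 w hw) hrv (hdiam w v hwv)]

/-- A resolving set of a strongly connected digraph of diameter at most 2
admits at most one 1-vertex and at most one 2-vertex. -/
theorem stmt_3 {V : Type u} {E : V → V → Prop}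
    (hsc : SConn E Set.univ)
    (hdiam : ∀ u v : V, u ≠ v → ddist E u v ≤ 2)
    {R : Set V} (hR : ResolvesSet E R Set.univ) :
    (∀ u v : V, OneVertex E R u → OneVertex E R v → u = v) ∧
    (∀ u v : V, TwoVertex E R u → TwoVertex E R v → u = v) :=
  stmt_3_general hdiam hR
end

section
/- Let G be a strongly connected directed graph with all distances between distinct vertices at most 2 and let R be a resolving set for G. If u1 is a 1-vertex w.r.t. R, u2 is a 2-vertex w.r.t. R, and (u1,u2) ∈ E(G), then G has neither a 1-vertex nor a 2-vertex w.r.t. R ∪ {u1}. Symmetrically, if (u2,u1) ∉ E(G), then G has neither a 1-vertex nor a 2-vertex w.r.t. R ∪ {u2}. -/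
universe u

/-!
In a digraph of diameter at most 2, the distance from `w` to `u ≠ w` is determined by whether
`(w, u)` is an edge: it is 1 if so and 2 otherwise. Hence two 1-vertices (or two 2-vertices) of `R`
have the same distance from every member of `R`, so a resolving set admits at most one of each.
A 1-vertex (2-vertex) of `R ∪ {x}` is one of `R` as well, so it can only be `u₁` (`u₂`).
Adding `u₁` to `R` removes `u₁` from the candidates, and the edge `(u₁, u₂)` removes `u₂`;
adding `u₂` removes `u₂`, and the non-edge `(u₂, u₁)` removes `u₁`.
-/

variable {V : Type u} {E : V → V → Prop}

theorem hasWalkLen_zero_iff_s17 {a b : V} : HasWalkLen E a b 0 ↔ a = b := by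
  constructor
  · rintro ⟨f, rfl, rfl, -⟩
    rfl
  · rintro rfl
    exact ⟨fun _ => a, rfl, rfl, fun i => i.elim0⟩

theorem hasWalkLen_one_iff_s17 {a b : V} : HasWalkLen E a b 1 ↔ E a b := by
  constructor
  · rintro ⟨f, rfl, rfl, hf⟩
    exact hf 0
  · intro h
    exact ⟨![a, b], rfl, rfl, fun i => by fin_cases i; exact h⟩

theorem ddist_eq_one {a b : V} (hne : a ≠ b) (h : E a b) : ddist E a b = 1 := by
  have hwalk : HasWalkLen E a b 1 := hasWalkLen_one_iff_s17.mpr h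
  have hmem : ddist E a b ∈ {n | HasWalkLen E a b n} := Nat.sInf_mem ⟨1, hwalk⟩
  have hpos : ddist E a b ≠ 0 := fun h0 => hne (hasWalkLen_zero_iff_s17.mp (h0 ▸ hmem))
  have hle : ddist E a b ≤ 1 := Nat.sInf_le hwalk
  omega

theorem ddist_eq_two {a b : V} (hne : a ≠ b) (h : ¬ E a b) (hr : Reaches E a b)
    (hle : ddist E a b ≤ 2) : ddist E a b = 2 := by
  have hmem : ddist E a b ∈ {n | HasWalkLen E a b n} := Nat.sInf_mem hr
  have h0 : ddist E a b ≠ 0 := fun h0 => hne (hasWalkLen_zero_iff_s17.mp (h0 ▸ hmem))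
  have h1 : ddist E a b ≠ 1 := fun h1 => h (hasWalkLen_one_iff_s17.mp (h1 ▸ hmem))
  omega

theorem OneVertex.anti {R S : Set V} {v : V} (hRS : R ⊆ S) (hv : OneVertex E S v) :
    OneVertex E R v :=
  ⟨fun h => hv.1 (hRS h), fun w hw => hv.2 w (hRS hw)⟩

theorem TwoVertex.anti {R S : Set V} {v : V} (hRS : R ⊆ S) (hv : TwoVertex E S v) :
    TwoVertex E R v :=
  ⟨fun h => hv.1 (hRS h), fun w hw => hv.2 w (hRS hw)⟩

namespace ResolvesSet

variable {R : Set V}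

theorem eq_of_forall_ddist_eq (hR : ResolvesSet E R Set.univ) {a b : V} (ha : a ∉ R)
    (hb : b ∉ R) (h : ∀ w ∈ R, ddist E w a = ddist E w b) : a = b := by
  by_contra hab
  obtain ⟨w, hw, rfl | rfl | ⟨-, -, hd⟩⟩ := hR a trivial b trivial hab
  · exact ha hw
  · exact hb hw
  · exact hd (h w hw)

theorem subsingleton_oneVertex (hR : ResolvesSet E R Set.univ) :
    {v | OneVertex E R v}.Subsingleton := by
  intro a ha b hb
  refine hR.eq_of_forall_ddist_eq ha.1 hb.1 fun w hw => ?_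
  rw [ddist_eq_one (ne_of_mem_of_not_mem hw ha.1) (ha.2 w hw),
    ddist_eq_one (ne_of_mem_of_not_mem hw hb.1) (hb.2 w hw)]

theorem subsingleton_twoVertex (hsc : SConn E Set.univ)
    (hdiam : ∀ u v : V, u ≠ v → ddist E u v ≤ 2) (hR : ResolvesSet E R Set.univ) :
    {v | TwoVertex E R v}.Subsingleton := by
  have hdist : ∀ w ∈ R, ∀ v, TwoVertex E R v → ddist E w v = 2 := fun w hw v hv =>
    have hne : w ≠ v := ne_of_mem_of_not_mem hw hv.1
    ddist_eq_two hne (hv.2 w hw) (hsc w trivial v trivial) (hdiam w v hne)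
  intro a ha b hb
  exact hR.eq_of_forall_ddist_eq ha.1 hb.1 fun w hw => by rw [hdist w hw a ha, hdist w hw b hb]

end ResolvesSet

/-- Double removers: if `u₁` is a 1-vertex, `u₂` a 2-vertex w.r.t. a resolving
set `R`, and `(u₁,u₂) ∈ E(G)`, then `R ∪ {u₁}` admits neither a 1-vertex nor a
2-vertex; symmetrically for `(u₂,u₁) ∉ E(G)` and `R ∪ {u₂}`. -/
theorem stmt_17 {V : Type u} {E : V → V → Prop}
    (hsc : SConn E Set.univ)
    (hdiam : ∀ u v : V, u ≠ v → ddist E u v ≤ 2)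
    {R : Set V} (hR : ResolvesSet E R Set.univ)
    {u₁ u₂ : V} (h1v : OneVertex E R u₁) (h2v : TwoVertex E R u₂) :
    (E u₁ u₂ →
      (∀ v : V, ¬ OneVertex E (R ∪ {u₁}) v) ∧
      (∀ v : V, ¬ TwoVertex E (R ∪ {u₁}) v)) ∧
    (¬ E u₂ u₁ →
      (∀ v : V, ¬ OneVertex E (R ∪ {u₂}) v) ∧
      (∀ v : V, ¬ TwoVertex E (R ∪ {u₂}) v)) := by
  have one_eq : ∀ x v, OneVertex E (R ∪ {x}) v → v = u₁ := fun _ v hv =>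
    hR.subsingleton_oneVertex (hv.anti Set.subset_union_left) h1v
  have two_eq : ∀ x v, TwoVertex E (R ∪ {x}) v → v = u₂ := fun _ v hv =>
    hR.subsingleton_twoVertex hsc hdiam (hv.anti Set.subset_union_left) h2v
  refine ⟨fun h12 => ⟨fun v hv => ?_, fun v hv => ?_⟩, fun h21 => ⟨fun v hv => ?_, fun v hv => ?_⟩⟩
  · exact hv.1 (Or.inr (one_eq _ v hv))
  · exact hv.2 u₁ (Or.inr rfl) (two_eq _ v hv ▸ h12)
  · exact h21 (one_eq _ v hv ▸ hv.2 u₂ (Or.inr rfl))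
  · exact hv.1 (Or.inr (two_eq _ v hv))
end
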